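/- Let d ≥ 1, let R₀ = ∏_{i=1}^d I_i ⊆ ℝ^d be a compact rectangle, and let f be a regular curved function on [a₀, a₀+δ₀] × R₀ with data (c₀, α, C_α, η, A_η) and sup-norm bounds B₁ ≥ ‖∂_a f‖_∞, B₂ ≥ ‖∇_x f‖_∞, B₃ ≥ ‖∇_x ∂_a f‖_∞, B₄ ≥ ‖D²_x f‖_∞. Assume in addition that the mixed derivative is Hölder in x: |∇_x ∂_a f(a,x) − ∇_x ∂_a f(a,x')| ≤ C_α |x − x'|^α for all a ∈ [a₀, a₀+δ₀] and x, x' ∈ R₀. Fix a ∈ [a₀, a₀+δ₀] and x₀ ∈ R₀, and define g : R₀ → ℝ by g(x) := ∂_a f(a,x) − ⟨(D²_x f(a,x₀))^{−1} ∇_x ∂_a f(a,x₀), ∇_x f(a,x)⟩. Then: (1) the gradient of g vanishes at x₀, i.e. ∇g(x₀) = 0; (2) there exists a constant C depending only on d, c₀, α, C_α, B₃, B₄ such that |g(x) − g(x₀)| ≤ C |x − x₀|^{1+α} for all x ∈ R₀. -/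

import Mathlib

/-!
The correction term is chosen so that the gradient of `g`,
`∇g(y) = ∇ₓ∂ₐf(a,y) − D²ₓf(a,y) v` with `v = (D²ₓf(a,x₀))⁻¹ ∇ₓ∂ₐf(a,x₀)`, vanishes at `x₀`.
Writing `∇g(y) = (∇ₓ∂ₐf(a,y) − ∇ₓ∂ₐf(a,x₀)) − (D²ₓf(a,y) − D²ₓf(a,x₀)) v`, the two Hölder
conditions in `x` give `|∇g(y)| ≲ |y − x₀|^α`, where `v` is controlled by Cramer's rule through
`B₃`, `B₄` and the lower bound `c₀` on the determinant. The mean value theorem on the segment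
`[x₀, x]` of the convex rectangle then gives `|g(x) − g(x₀)| ≲ |x − x₀|^{1+α}`.
-/

open MeasureTheory Metric Set

noncomputable section

/-- The compact axis-parallel rectangle `∏ i, [lo i, hi i]` in `ℝ^d`. -/
def Rect (d : ℕ) (lo hi : Fin d → ℝ) : Set (EuclideanSpace ℝ (Fin d)) :=
  {x | ∀ i, x i ∈ Set.Icc (lo i) (hi i)}

/-- `f : [a₀, a₀+δ₀] × R₀ → ℝ` is a *regular curved function* with data
`(c₀, α, Cα, η, Aη)` (Definition 1.2 of the paper).  The functions `fa`, `fx`, `fax`, `fxx`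
are witnesses for `∂ₐf`, `∇ₓf`, `∇ₓ∂ₐf` and the Hessian `D²ₓf` respectively. -/
structure IsRegularCurvedFunction (d : ℕ) (a₀ δ₀ : ℝ) (lo hi : Fin d → ℝ)
    (f fa : ℝ → EuclideanSpace ℝ (Fin d) → ℝ)
    (fx fax : ℝ → EuclideanSpace ℝ (Fin d) → EuclideanSpace ℝ (Fin d))
    (fxx : ℝ → EuclideanSpace ℝ (Fin d) → Matrix (Fin d) (Fin d) ℝ)
    (c₀ α Cα η Aη : ℝ) : Prop where
  δ₀_pos : 0 < δ₀
  rect_pos : ∀ i, lo i < hi i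
  c₀_pos : 0 < c₀
  α_mem : α ∈ Set.Ioc (0:ℝ) 1
  Cα_pos : 0 < Cα
  η_mem : η ∈ Set.Ioc (0:ℝ) 1
  Aη_pos : 0 < Aη
  /-- `fa` is the partial derivative of `f` in the parameter `a`. -/
  hasDeriv_a : ∀ a ∈ Set.Icc a₀ (a₀ + δ₀), ∀ x ∈ Rect d lo hi,
    HasDerivWithinAt (fun t => f t x) (fa a x) (Set.Icc a₀ (a₀ + δ₀)) a
  /-- `fx` is the gradient of `f` in `x`. -/
  hasGrad_x : ∀ a ∈ Set.Icc a₀ (a₀ + δ₀), ∀ x ∈ Rect d lo hi,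
    HasGradientWithinAt (f a) (fx a x) (Rect d lo hi) x
  /-- `fax` is the gradient in `x` of `∂ₐ f`. -/
  hasGrad_ax : ∀ a ∈ Set.Icc a₀ (a₀ + δ₀), ∀ x ∈ Rect d lo hi,
    HasGradientWithinAt (fun y => fa a y) (fax a x) (Rect d lo hi) x
  /-- `fxx` is the Hessian matrix of `f` in `x`. -/
  hasHessian : ∀ a ∈ Set.Icc a₀ (a₀ + δ₀), ∀ x ∈ Rect d lo hi, ∀ l,
    HasGradientWithinAt (fun y => fx a y l)
      ((WithLp.equiv 2 (Fin d → ℝ)).symm fun k => fxx a x k l) (Rect d lo hi) x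
  /-- The curvature condition (1.3): `|det D²ₓ f| ≥ c₀`. -/
  curved : ∀ a ∈ Set.Icc a₀ (a₀ + δ₀), ∀ x ∈ Rect d lo hi, c₀ ≤ |(fxx a x).det|
  /-- Hölder continuity (1.4) of the Hessian in `x` (entrywise). -/
  hess_holder : ∀ a ∈ Set.Icc a₀ (a₀ + δ₀), ∀ x ∈ Rect d lo hi, ∀ x' ∈ Rect d lo hi,
    ∀ k l, |fxx a x k l - fxx a x' k l| ≤ Cα * ‖x - x'‖ ^ α
  /-- Hölder continuity (1.5) of `∂ₐ f` in `a`. -/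
  fa_holder : ∀ a ∈ Set.Icc a₀ (a₀ + δ₀), ∀ a' ∈ Set.Icc a₀ (a₀ + δ₀), ∀ x ∈ Rect d lo hi,
    |fa a x - fa a' x| ≤ Aη * |a - a'| ^ η
  /-- Hölder continuity (1.6) of `∇ₓ f` in `a`. -/
  fx_holder : ∀ a ∈ Set.Icc a₀ (a₀ + δ₀), ∀ a' ∈ Set.Icc a₀ (a₀ + δ₀), ∀ x ∈ Rect d lo hi,
    ‖fx a x - fx a' x‖ ≤ Aη * |a - a'| ^ η

open scoped Matrix

lemma convex_rect (d : ℕ) (lo hi : Fin d → ℝ) : Convex ℝ (Rect d lo hi) :=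
  fun _ hx _ hy _ _ ha hb hab i => by
    simpa using convex_Icc (lo i) (hi i) (hx i) (hy i) ha hb hab

namespace Matrix

open Fintype

lemma abs_mulVec_apply_le {m n : Type*} [Fintype n] {A : Matrix m n ℝ} {v : n → ℝ} {a b : ℝ}
    (hA : ∀ i j, |A i j| ≤ a) (hv : ∀ j, |v j| ≤ b) (i : m) :
    |(A *ᵥ v) i| ≤ card n * (a * b) := by
  calc |(A *ᵥ v) i| ≤ ∑ j, |A i j| * |v j| := by
        simpa only [mulVec, dotProduct, abs_mul] using
          Finset.abs_sum_le_sum_abs (fun j => A i j * v j) Finset.univ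
    _ ≤ ∑ _j : n, a * b := Finset.sum_le_sum fun j _ =>
        mul_le_mul (hA i j) (hv j) (abs_nonneg _) ((abs_nonneg _).trans (hA i j))
    _ = card n * (a * b) := by simp

/-- Cramer's rule: the entries of the adjugate are determinants of matrices with entries
bounded by `max b 1`. -/
lemma abs_inv_apply_le {n : Type*} [Fintype n] [DecidableEq n] {A : Matrix n n ℝ} {b c : ℝ}
    (hc : 0 < c) (hdet : c ≤ |A.det|) (hA : ∀ i j, |A i j| ≤ b) (i j : n) :
    |A⁻¹ i j| ≤ (card n).factorial * max b 1 ^ card n / c := by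
  have hadj : |A.adjugate i j| ≤ (card n).factorial * max b 1 ^ card n := by
    rw [adjugate_apply]
    refine (det_le (abv := AbsoluteValue.abs) fun k l => ?_).trans_eq (nsmul_eq_mul _ _)
    rw [updateRow_apply]
    split_ifs
    · rcases eq_or_ne i l with rfl | hil <;> simp [*]
    · exact (hA k l).trans (le_max_left _ _)
  rw [inv_def, Ring.inverse_eq_inv', smul_apply, smul_eq_mul, abs_mul, abs_inv, div_eq_inv_mul]
  exact mul_le_mul (inv_anti₀ hc hdet) hadj (abs_nonneg _) (inv_nonneg.2 hc.le)

end Matrix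

lemma EuclideanSpace.norm_le_sqrt_card_mul_of_abs_le {ι : Type*} [Fintype ι]
    {x : EuclideanSpace ℝ ι} {c : ℝ} (hx : ∀ i, |x i| ≤ c) :
    ‖x‖ ≤ √(Fintype.card ι) * c := by
  rcases isEmpty_or_nonempty ι with hι | ⟨⟨i⟩⟩
  · simp [Subsingleton.elim x 0]
  have hc : 0 ≤ c := (abs_nonneg _).trans (hx i)
  rw [EuclideanSpace.norm_eq, ← Real.sqrt_sq hc, ← Real.sqrt_mul (Nat.cast_nonneg _)]
  calc √(∑ i, ‖x i‖ ^ 2) ≤ √(∑ _i : ι, c ^ 2) :=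
        Real.sqrt_le_sqrt (Finset.sum_le_sum fun i _ => by
          rw [Real.norm_eq_abs]
          exact pow_le_pow_left₀ (abs_nonneg _) (hx i) 2)
    _ = √(Fintype.card ι * c ^ 2) := by simp

/-- `w - H v = (w - w₀) - (H - M) v` since `M v = w₀`. -/
lemma norm_sub_toLp_mulVec_le {ι : Type*} [Fintype ι] {w w₀ : EuclideanSpace ℝ ι}
    {H M : Matrix ι ι ℝ} {v : ι → ℝ} {ε V : ℝ} (hv : M *ᵥ v = w₀) (hw : ‖w - w₀‖ ≤ ε)
    (hH : ∀ i j, |H i j - M i j| ≤ ε) (hV : ∀ j, |v j| ≤ V) :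
    ‖w - WithLp.toLp 2 (H *ᵥ v)‖ ≤ √(Fintype.card ι) * (ε * (1 + Fintype.card ι * V)) := by
  refine EuclideanSpace.norm_le_sqrt_card_mul_of_abs_le fun i => ?_
  have hsplit : (w - WithLp.toLp 2 (H *ᵥ v)) i = (w - w₀) i - ((H - M) *ᵥ v) i := by
    simp [Matrix.sub_mulVec, ← hv]
  rw [hsplit]
  calc |(w - w₀) i - ((H - M) *ᵥ v) i| ≤ |(w - w₀) i| + |((H - M) *ᵥ v) i| := abs_sub _ _
    _ ≤ ε + Fintype.card ι * (ε * V) :=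
        add_le_add ((PiLp.norm_apply_le _ i).trans hw) (Matrix.abs_mulVec_apply_le hH hV i)
    _ = ε * (1 + Fintype.card ι * V) := by ring

section Gradient

variable {E : Type*} [NormedAddCommGroup E] [InnerProductSpace ℝ E] [CompleteSpace E]

open InnerProductSpace

theorem HasGradientWithinAt.sub_sum_const_mul {ι : Type*} [Fintype ι] {φ : E → ℝ}
    {ψ : ι → E → ℝ} {φ' : E} {ψ' : ι → E} {s : Set E} {x : E}
    (hφ : HasGradientWithinAt φ φ' s x) (hψ : ∀ k, HasGradientWithinAt (ψ k) (ψ' k) s x)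
    (v : ι → ℝ) :
    HasGradientWithinAt (fun y => φ y - ∑ k, v k * ψ k y) (φ' - ∑ k, v k • ψ' k) s x := by
  simp only [hasGradientWithinAt_iff_hasFDerivWithinAt, map_sub, map_sum, map_smul] at hφ hψ ⊢
  exact hφ.sub (HasFDerivWithinAt.fun_sum fun k _ => (hψ k).const_mul (v k))

theorem Convex.abs_sub_le_mul_rpow_of_norm_gradient_le {s : Set E} (hs : Convex ℝ s)
    {g : E → ℝ} {G : E → E} (hg : ∀ y ∈ s, HasGradientWithinAt g (G y) s y) {K α : ℝ}
    (hK : 0 ≤ K) (hα : 0 ≤ α) {x₀ x : E} (hx₀ : x₀ ∈ s) (hx : x ∈ s)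
    (hG : ∀ y ∈ s, ‖G y‖ ≤ K * ‖y - x₀‖ ^ α) :
    |g x - g x₀| ≤ K * ‖x - x₀‖ ^ (1 + α) := by
  have hseg := hs.segment_subset hx₀ hx
  have hmvt := (convex_segment x₀ x).norm_image_sub_le_of_norm_hasFDerivWithin_le
    (f' := fun y => toDual ℝ E (G y)) (C := K * ‖x - x₀‖ ^ α)
    (fun y hy => ((hg y (hseg hy)).hasFDerivWithinAt).mono hseg)
    (fun y hy => by
      rw [LinearIsometryEquiv.norm_map]
      exact (hG y (hseg hy)).trans (by gcongr; exact norm_sub_le_of_mem_segment hy))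
    (left_mem_segment ℝ x₀ x) (right_mem_segment ℝ x₀ x)
  rw [Real.rpow_one_add' (norm_nonneg _) (by positivity), ← Real.norm_eq_abs]
  exact hmvt.trans_eq (by ring)

end Gradient

theorem IsRegularCurvedFunction.hasGradientWithinAt_sub_sum_mul {d : ℕ} {a₀ δ₀ : ℝ}
    {lo hi : Fin d → ℝ} {f fa : ℝ → EuclideanSpace ℝ (Fin d) → ℝ}
    {fx fax : ℝ → EuclideanSpace ℝ (Fin d) → EuclideanSpace ℝ (Fin d)}
    {fxx : ℝ → EuclideanSpace ℝ (Fin d) → Matrix (Fin d) (Fin d) ℝ} {c₀ α Cα η Aη : ℝ}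
    (hf : IsRegularCurvedFunction d a₀ δ₀ lo hi f fa fx fax fxx c₀ α Cα η Aη)
    {a : ℝ} (ha : a ∈ Set.Icc a₀ (a₀ + δ₀)) (v : Fin d → ℝ) {y : EuclideanSpace ℝ (Fin d)}
    (hy : y ∈ Rect d lo hi) :
    HasGradientWithinAt (fun x => fa a x - ∑ k, v k * fx a x k)
      (fax a y - WithLp.toLp 2 (fxx a y *ᵥ v)) (Rect d lo hi) y := by
  convert (hf.hasGrad_ax a ha y hy).sub_sum_const_mul (hf.hasHessian a ha y hy) v using 1
  ext j
  simp [Matrix.mulVec, dotProduct, mul_comm]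

theorem critical_point_holder_estimate_general (d : ℕ) (c₀ α Cα B₃ B₄ : ℝ) :
    ∃ C : ℝ, 0 < C ∧
      ∀ (η Aη B₁ B₂ : ℝ) (a₀ δ₀ : ℝ) (lo hi : Fin d → ℝ)
        (f fa : ℝ → EuclideanSpace ℝ (Fin d) → ℝ)
        (fx fax : ℝ → EuclideanSpace ℝ (Fin d) → EuclideanSpace ℝ (Fin d))
        (fxx : ℝ → EuclideanSpace ℝ (Fin d) → Matrix (Fin d) (Fin d) ℝ),
        IsRegularCurvedFunction d a₀ δ₀ lo hi f fa fx fax fxx c₀ α Cα η Aη →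
        (∀ a ∈ Set.Icc a₀ (a₀ + δ₀), ∀ x ∈ Rect d lo hi, |fa a x| ≤ B₁) →
        (∀ a ∈ Set.Icc a₀ (a₀ + δ₀), ∀ x ∈ Rect d lo hi, ‖fx a x‖ ≤ B₂) →
        (∀ a ∈ Set.Icc a₀ (a₀ + δ₀), ∀ x ∈ Rect d lo hi, ‖fax a x‖ ≤ B₃) →
        (∀ a ∈ Set.Icc a₀ (a₀ + δ₀), ∀ x ∈ Rect d lo hi, ∀ k l, |fxx a x k l| ≤ B₄) →
        -- additional hypothesis: the mixed derivative `∇ₓ ∂ₐ f` is `α`-Hölder in `x`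
        (∀ a ∈ Set.Icc a₀ (a₀ + δ₀), ∀ x ∈ Rect d lo hi, ∀ x' ∈ Rect d lo hi,
          ‖fax a x - fax a x'‖ ≤ Cα * ‖x - x'‖ ^ α) →
        ∀ a ∈ Set.Icc a₀ (a₀ + δ₀), ∀ x₀ ∈ Rect d lo hi,
          -- the function `g`
          (HasGradientWithinAt
            (fun x => fa a x - ∑ k, ((fxx a x₀)⁻¹.mulVec fun k => fax a x₀ k) k * fx a x k)
            0 (Rect d lo hi) x₀) ∧
          (∀ x ∈ Rect d lo hi,
            |(fa a x - ∑ k, ((fxx a x₀)⁻¹.mulVec fun k => fax a x₀ k) k * fx a x k) -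
             (fa a x₀ - ∑ k, ((fxx a x₀)⁻¹.mulVec fun k => fax a x₀ k) k * fx a x₀ k)| ≤
              C * ‖x - x₀‖ ^ (1 + α)) := by
  -- `V` bounds the entries of `v = (D²ₓf(a,x₀))⁻¹ ∇ₓ∂ₐf(a,x₀)`
  set V : ℝ := d * (d.factorial * max B₄ 1 ^ d / c₀ * B₃)
  set K : ℝ := √d * (Cα * (1 + d * V))
  refine ⟨max K 1, by positivity, ?_⟩
  intro η Aη B₁ B₂ a₀ δ₀ lo hi f fa fx fax fxx hf _ _ hB₃ hB₄ hmix a ha x₀ hx₀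
  set M := fxx a x₀
  set v := M⁻¹ *ᵥ fun k => fax a x₀ k
  have hdet : c₀ ≤ |M.det| := hf.curved a ha x₀ hx₀
  have hMv : M *ᵥ v = fun k => fax a x₀ k := by
    rw [Matrix.mulVec_mulVec, Matrix.mul_nonsing_inv _
      (isUnit_iff_ne_zero.2 (abs_pos.1 (hf.c₀_pos.trans_le hdet))), Matrix.one_mulVec]
  have hV : ∀ l, |v l| ≤ V := fun l => by
    simpa using Matrix.abs_mulVec_apply_le
      (Matrix.abs_inv_apply_le hf.c₀_pos hdet (hB₄ a ha x₀ hx₀))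
      (fun k => (PiLp.norm_apply_le _ k).trans (hB₃ a ha x₀ hx₀)) l
  have hK : 0 ≤ K := by
    have hB₃_nonneg := (norm_nonneg _).trans (hB₃ a ha x₀ hx₀)
    have hc₀ := hf.c₀_pos
    have hCα := hf.Cα_pos
    positivity
  have hgrad : ∀ y ∈ Rect d lo hi, HasGradientWithinAt (fun x => fa a x - ∑ k, v k * fx a x k)
      (fax a y - WithLp.toLp 2 (fxx a y *ᵥ v)) (Rect d lo hi) y :=
    fun y hy => hf.hasGradientWithinAt_sub_sum_mul ha v hy
  have hG : ∀ y ∈ Rect d lo hi, ‖fax a y - WithLp.toLp 2 (fxx a y *ᵥ v)‖ ≤ K * ‖y - x₀‖ ^ α :=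
    fun y hy => (norm_sub_toLp_mulVec_le hMv (hmix a ha y hy x₀ hx₀)
      (hf.hess_holder a ha y hy x₀ hx₀) hV).trans_eq (by simp only [K, Fintype.card_fin]; ring)
  have hG₀ : fax a x₀ - WithLp.toLp 2 (M *ᵥ v) = 0 := by
    rw [hMv, WithLp.toLp_ofLp, sub_self]
  refine ⟨hG₀ ▸ hgrad x₀ hx₀, fun x hx => ?_⟩
  refine ((convex_rect d lo hi).abs_sub_le_mul_rpow_of_norm_gradient_le hgrad hK
    hf.α_mem.1.le hx₀ hx hG).trans ?_
  gcongr
  exact le_max_left _ _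

/-- **Key pointwise Hölder estimate (used in the measure bound of Proposition 2.1).**
Assume in addition that `∇ₓ ∂ₐ f` is `α`-Hölder in `x`.  Fix `a` and `x₀ ∈ R₀` and set
`g(x) := ∂ₐ f(a,x) - ⟨(D²ₓ f(a,x₀))⁻¹ ∇ₓ∂ₐ f(a,x₀), ∇ₓ f(a,x)⟩`.
Then `∇g(x₀) = 0`, and `|g(x) - g(x₀)| ≤ C |x - x₀|^{1+α}` with `C` depending only on
`d, c₀, α, Cα, B₃, B₄`. -/
theorem critical_point_holder_estimate (d : ℕ) (hd : 1 ≤ d) (c₀ α Cα B₃ B₄ : ℝ) :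
    ∃ C : ℝ, 0 < C ∧
      ∀ (η Aη B₁ B₂ : ℝ) (a₀ δ₀ : ℝ) (lo hi : Fin d → ℝ)
        (f fa : ℝ → EuclideanSpace ℝ (Fin d) → ℝ)
        (fx fax : ℝ → EuclideanSpace ℝ (Fin d) → EuclideanSpace ℝ (Fin d))
        (fxx : ℝ → EuclideanSpace ℝ (Fin d) → Matrix (Fin d) (Fin d) ℝ),
        IsRegularCurvedFunction d a₀ δ₀ lo hi f fa fx fax fxx c₀ α Cα η Aη →
        (∀ a ∈ Set.Icc a₀ (a₀ + δ₀), ∀ x ∈ Rect d lo hi, |fa a x| ≤ B₁) →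
        (∀ a ∈ Set.Icc a₀ (a₀ + δ₀), ∀ x ∈ Rect d lo hi, ‖fx a x‖ ≤ B₂) →
        (∀ a ∈ Set.Icc a₀ (a₀ + δ₀), ∀ x ∈ Rect d lo hi, ‖fax a x‖ ≤ B₃) →
        (∀ a ∈ Set.Icc a₀ (a₀ + δ₀), ∀ x ∈ Rect d lo hi, ∀ k l, |fxx a x k l| ≤ B₄) →
        -- additional hypothesis: the mixed derivative `∇ₓ ∂ₐ f` is `α`-Hölder in `x`
        (∀ a ∈ Set.Icc a₀ (a₀ + δ₀), ∀ x ∈ Rect d lo hi, ∀ x' ∈ Rect d lo hi,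
          ‖fax a x - fax a x'‖ ≤ Cα * ‖x - x'‖ ^ α) →
        ∀ a ∈ Set.Icc a₀ (a₀ + δ₀), ∀ x₀ ∈ Rect d lo hi,
          -- the function `g`
          (HasGradientWithinAt
            (fun x => fa a x - ∑ k, ((fxx a x₀)⁻¹.mulVec fun k => fax a x₀ k) k * fx a x k)
            0 (Rect d lo hi) x₀) ∧
          (∀ x ∈ Rect d lo hi,
            |(fa a x - ∑ k, ((fxx a x₀)⁻¹.mulVec fun k => fax a x₀ k) k * fx a x k) -
             (fa a x₀ - ∑ k, ((fxx a x₀)⁻¹.mulVec fun k => fax a x₀ k) k * fx a x₀ k)| ≤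
              C * ‖x - x₀‖ ^ (1 + α)) :=
  critical_point_holder_estimate_general d c₀ α Cα B₃ B₄
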